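/- Let z ∈ ℂ be fixed with |z| = 1 and z ≠ 1. Then there exists a function G : ℂ×ℂ → ℂ that is holomorphic in each of its two variables separately on the domain ℂ × (ℂ∖(−∞,0]), such that G(s,w) = Φ₀(z,s,w) whenever Re(s) > 1 and w ∈ ℂ∖(−∞,0]. -/

import Mathlib

/-!
Summation by parts turns `∑ zⁿ f(n)` into `f(0)/(1-z) + z/(1-z) · ∑ zⁿ Δf(n)` whenever both
series converge. For `f(x) = (x+w)^{-s}` the mean value theorem gives
`Δᵏf(x) = O((1+x)^{-Re s-k})`, locally uniformly in `s` and `w`. So after `k` summations by parts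
the remaining series converges absolutely and locally uniformly for `Re s > 1 - k` and `w` off
`(-∞, 0]`, and is holomorphic there in each variable. The expressions obtained for different `k`
agree where both make sense, so choosing `k = ⌈2 - Re s⌉₊` glues them into the continuation.
-/

open Complex

/-- The Lerch zeta series `Φ₀(z,s,w) = ∑_{n=0}^∞ z^n (n+w)^{−s}` (complex power). -/
noncomputable def lerch (z s w : ℂ) : ℂ := ∑' n : ℕ, z ^ n * ((n : ℂ) + w) ^ (-s)

/-- The real half-line `(−∞,0]` viewed inside `ℂ`. -/
def negRay : Set ℂ := {w : ℂ | ∃ x : ℝ, x ≤ 0 ∧ (x : ℂ) = w}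

open fwdDiff

theorem negRay_eq_compl_slitPlane : negRay = slitPlaneᶜ := by
  ext w
  simp only [negRay, Set.mem_ofPred_eq, Set.mem_compl_iff, mem_slitPlane_iff, not_or, not_lt,
    not_not]
  constructor
  · rintro ⟨x, hx, rfl⟩
    simpa using hx
  · rintro ⟨hre, him⟩
    exact ⟨w.re, hre, Complex.ext (by simp) (by simp [him])⟩

theorem ofReal_add_mem_slitPlane {w : ℂ} (hw : w ∈ slitPlane) {x : ℝ} (hx : 0 ≤ x) :
    (x : ℂ) + w ∈ slitPlane := by
  rw [mem_slitPlane_iff] at hw ⊢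
  simp only [add_re, ofReal_re, add_im, ofReal_im, zero_add]
  rcases hw with h | h
  · exact .inl (by linarith)
  · exact .inr h

theorem exists_mul_one_add_le_norm_ofReal_add {w : ℂ} (hw : w ∈ slitPlane) :
    ∃ c : ℝ, 0 < c ∧ c ≤ 1 ∧ ∀ y : ℝ, 0 ≤ y → c * (1 + y) ≤ ‖(y : ℂ) + w‖ := by
  set d := max w.re |w.im|
  have hd : 0 < d := by
    rcases mem_slitPlane_iff.1 hw with h | h
    · exact lt_max_of_lt_left h
    · exact lt_max_of_lt_right (abs_pos.2 h)
  refine ⟨d / (d + 1 + ‖w‖), by positivity,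
    (div_le_one (by positivity)).2 (by linarith [norm_nonneg w]), ?_⟩
  intro y hy
  have h_dist : d ≤ ‖(y : ℂ) + w‖ := by
    refine max_le ?_ ?_
    · calc w.re ≤ ((y : ℂ) + w).re := by simp [hy]
        _ ≤ ‖(y : ℂ) + w‖ := re_le_norm _
    · simpa using abs_im_le_norm ((y : ℂ) + w)
  have h_far : y - ‖w‖ ≤ ‖(y : ℂ) + w‖ := by
    simpa only [sub_neg_eq_add, norm_real, Real.norm_eq_abs, abs_of_nonneg hy, norm_neg] using
      norm_sub_norm_le (y : ℂ) (-w)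
  rw [div_mul_eq_mul_div, div_le_iff₀ (by positivity)]
  nlinarith [norm_nonneg w]

theorem mem_slitPlane_of_mul_one_add_le_norm {c : ℝ} {w : ℂ} (hc : 0 < c)
    (hw : ∀ y : ℝ, 0 ≤ y → c * (1 + y) ≤ ‖(y : ℂ) + w‖) : w ∈ slitPlane := by
  by_contra h
  rw [← Set.mem_compl_iff, ← negRay_eq_compl_slitPlane] at h
  obtain ⟨x, hx, rfl⟩ := h
  have := hw (-x) (by linarith)
  simp only [ofReal_neg, neg_add_cancel, norm_zero] at this
  nlinarith

theorem mul_one_add_le_norm_of_dist_lt {c : ℝ} {w₀ w : ℂ}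
    (hw₀ : ∀ y : ℝ, 0 ≤ y → c * (1 + y) ≤ ‖(y : ℂ) + w₀‖) (hw : dist w w₀ < c / 2) :
    ∀ y : ℝ, 0 ≤ y → c / 2 * (1 + y) ≤ ‖(y : ℂ) + w‖ := by
  intro y hy
  have h_tri : ‖(y : ℂ) + w₀‖ ≤ ‖(y : ℂ) + w‖ + dist w w₀ := by
    rw [dist_comm, dist_eq_norm]
    simpa using norm_add_le ((y : ℂ) + w) (w₀ - w)
  nlinarith [hw₀ y hy, dist_nonneg (x := w) (y := w₀)]

noncomputable def cpowFwdDiff (k : ℕ) (s w : ℂ) : ℝ → ℂ :=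
  (Δ_[1])^[k] fun x : ℝ => ((x : ℂ) + w) ^ (-s)

theorem cpowFwdDiff_zero (s w : ℂ) (x : ℝ) : cpowFwdDiff 0 s w x = ((x : ℂ) + w) ^ (-s) := rfl

theorem cpowFwdDiff_succ (k : ℕ) (s w : ℂ) (x : ℝ) :
    cpowFwdDiff (k + 1) s w x = cpowFwdDiff k s w (x + 1) - cpowFwdDiff k s w x := by
  rw [cpowFwdDiff, Function.iterate_succ_apply']
  rfl

theorem hasDerivAt_cpowFwdDiff (k : ℕ) (s : ℂ) {w : ℂ} (hw : w ∈ slitPlane) {x : ℝ}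
    (hx : 0 ≤ x) : HasDerivAt (cpowFwdDiff k s w) (-s * cpowFwdDiff k (s + 1) w x) x := by
  induction k generalizing x with
  | zero =>
    have := (((hasDerivAt_id (x : ℂ)).add_const w).cpow_const (c := -s)
      (ofReal_add_mem_slitPlane hw hx)).comp_ofReal
    convert this using 1
    · rfl
    · rw [cpowFwdDiff_zero, neg_add', id, mul_one]
  | succ k ih =>
    have h_shift := (ih (x := x + 1) (by linarith)).comp_add_const x 1
    rw [funext (cpowFwdDiff_succ k s w), cpowFwdDiff_succ, mul_sub]
    exact h_shift.fun_sub (ih hx)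

theorem differentiable_cpowFwdDiff_exponent (k : ℕ) {w : ℂ} (hw : w ∈ slitPlane) {x : ℝ}
    (hx : 0 ≤ x) : Differentiable ℂ fun s => cpowFwdDiff k s w x := by
  induction k generalizing x with
  | zero =>
    exact differentiable_id.neg.const_cpow
      (.inl (slitPlane_ne_zero (ofReal_add_mem_slitPlane hw hx)))
  | succ k ih =>
    simpa only [cpowFwdDiff_succ] using (ih (x := x + 1) (by linarith)).fun_sub (ih hx)

theorem differentiableAt_cpowFwdDiff_shift (k : ℕ) (s : ℂ) {w : ℂ} (hw : w ∈ slitPlane)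
    {x : ℝ} (hx : 0 ≤ x) : DifferentiableAt ℂ (fun w => cpowFwdDiff k s w x) w := by
  induction k generalizing x with
  | zero =>
    exact ((hasDerivAt_id w).const_add (x : ℂ)).cpow_const (ofReal_add_mem_slitPlane hw hx)
      |>.differentiableAt
  | succ k ih =>
    simpa only [cpowFwdDiff_succ] using (ih (x := x + 1) (by linarith)).fun_sub (ih hx)

theorem norm_cpowFwdDiff_le {c R : ℝ} {w : ℂ} (hc : 0 < c)
    (hw : ∀ y : ℝ, 0 ≤ y → c * (1 + y) ≤ ‖(y : ℂ) + w‖) (k : ℕ) {s : ℂ} (hsR : ‖s‖ ≤ R)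
    (hks : 0 ≤ s.re + k) {x : ℝ} (hx : 0 ≤ x) :
    ‖cpowFwdDiff k s w x‖ ≤
      Real.exp (Real.pi * (R + k)) * (R + k) ^ k * (c * (1 + x)) ^ (-(s.re + k)) := by
  have hcx : 0 < c * (1 + x) := by positivity
  induction k generalizing s R x with
  | zero =>
    have h_arg : arg ((x : ℂ) + w) * s.im ≤ Real.pi * R :=
      (le_abs_self _).trans <| (abs_mul _ _).trans_le <|
        mul_le_mul (abs_arg_le_pi _) ((abs_im_le_norm s).trans hsR) (abs_nonneg _)
          Real.pi_pos.le
    have h_pow : ‖(x : ℂ) + w‖ ^ (-s.re) ≤ (c * (1 + x)) ^ (-s.re) :=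
      Real.rpow_le_rpow_of_nonpos hcx (hw x hx) (by simpa using hks)
    calc ‖cpowFwdDiff 0 s w x‖
        ≤ ‖(x : ℂ) + w‖ ^ (-s.re) / Real.exp (arg ((x : ℂ) + w) * (-s).im) := norm_cpow_le _ _
      _ = ‖(x : ℂ) + w‖ ^ (-s.re) * Real.exp (arg ((x : ℂ) + w) * s.im) := by
        rw [neg_im, mul_neg, Real.exp_neg, div_inv_eq_mul]
      _ ≤ (c * (1 + x)) ^ (-s.re) * Real.exp (Real.pi * R) :=
        mul_le_mul h_pow (Real.exp_le_exp.2 h_arg) (by positivity) (by positivity)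
      _ = _ := by simp [mul_comm]
  | succ k ih =>
    have hR : 0 ≤ R := (norm_nonneg s).trans hsR
    have hs1 : ‖s + 1‖ ≤ R + 1 := (norm_add_le s 1).trans (by simpa using hsR)
    have hks1 : 0 ≤ (s + 1).re + k := by
      push_cast at hks ⊢; simp only [add_re, one_re]; linarith
    set M := Real.exp (Real.pi * (R + 1 + k)) * (R + 1 + k) ^ k with hM
    have h_deriv_le : ∀ t ∈ Set.Icc x (x + 1),
        ‖-s * cpowFwdDiff k (s + 1) w t‖ ≤ ‖s‖ * (M * (c * (1 + x)) ^ (-(s.re + (k + 1)))) := by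
      intro t ht
      have h_mono :
          (c * (1 + t)) ^ (-((s + 1).re + k)) ≤ (c * (1 + x)) ^ (-(s.re + (k + 1))) := by
        rw [add_re, one_re, show s.re + 1 + k = s.re + (k + 1) by ring]
        exact Real.rpow_le_rpow_of_nonpos hcx (by nlinarith [ht.1])
          (by push_cast at hks; linarith)
      rw [norm_mul, norm_neg]
      have h_ih := ih hs1 hks1 (hx.trans ht.1) (by nlinarith [ht.1])
      exact mul_le_mul_of_nonneg_left
        (h_ih.trans (mul_le_mul_of_nonneg_left h_mono (by positivity))) (norm_nonneg s)
    have h_mvt := Convex.norm_image_sub_le_of_norm_hasDerivWithin_le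
      (fun t ht => (hasDerivAt_cpowFwdDiff k s (mem_slitPlane_of_mul_one_add_le_norm hc hw)
        (hx.trans ht.1)).hasDerivWithinAt) h_deriv_le (convex_Icc x (x + 1))
      (Set.left_mem_Icc.2 (by linarith)) (Set.right_mem_Icc.2 (by linarith))
    rw [add_sub_cancel_left, norm_one, mul_one] at h_mvt
    rw [cpowFwdDiff_succ]
    refine h_mvt.trans ?_
    have hB : 0 ≤ R + (k + 1) := by positivity
    rw [hM, show R + 1 + k = R + (k + 1) by ring]
    push_cast
    calc _ ≤ (R + (k + 1)) * (Real.exp (Real.pi * (R + (k + 1))) * (R + (k + 1)) ^ k *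
          (c * (1 + x)) ^ (-(s.re + (k + 1)))) :=
        mul_le_mul_of_nonneg_right (by linarith [Nat.cast_nonneg (α := ℝ) k]) (by positivity)
      _ = _ := by ring

theorem norm_pow_mul_cpowFwdDiff_le {z : ℂ} (hz : ‖z‖ ≤ 1) {c R p : ℝ} {w : ℂ} (hc : 0 < c)
    (hc1 : c ≤ 1) (hw : ∀ y : ℝ, 0 ≤ y → c * (1 + y) ≤ ‖(y : ℂ) + w‖) (k : ℕ) {s : ℂ}
    (hsR : ‖s‖ ≤ R) (hp : p ≤ s.re + k) (hp0 : 0 ≤ p) (n : ℕ) :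
    ‖z ^ n * cpowFwdDiff k s w n‖ ≤
      Real.exp (Real.pi * (R + k)) * (R + k) ^ k * c ^ (-(R + k)) * (1 + n) ^ (-p) := by
  have hR : 0 ≤ R := (norm_nonneg s).trans hsR
  have hsk : s.re + k ≤ R + k := by linarith [re_le_norm s]
  have h_c : c ^ (-(s.re + k)) ≤ c ^ (-(R + k)) :=
    Real.rpow_le_rpow_of_exponent_ge hc hc1 (by linarith)
  have h_n : (1 + n : ℝ) ^ (-(s.re + k)) ≤ (1 + n) ^ (-p) :=
    Real.rpow_le_rpow_of_exponent_le (by linarith [Nat.cast_nonneg (α := ℝ) n]) (by linarith)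
  calc ‖z ^ n * cpowFwdDiff k s w n‖ ≤ ‖cpowFwdDiff k s w n‖ := by
        rw [norm_mul, norm_pow]
        exact mul_le_of_le_one_left (norm_nonneg _) (pow_le_one₀ (norm_nonneg z) hz)
    _ ≤ Real.exp (Real.pi * (R + k)) * (R + k) ^ k * (c * (1 + n)) ^ (-(s.re + k)) :=
        norm_cpowFwdDiff_le hc hw k hsR (hp0.trans hp) n.cast_nonneg
    _ = Real.exp (Real.pi * (R + k)) * (R + k) ^ k *
          (c ^ (-(s.re + k)) * (1 + n : ℝ) ^ (-(s.re + k))) := by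
        rw [Real.mul_rpow hc.le (by positivity)]
    _ ≤ _ := by
        rw [mul_assoc _ (c ^ _)]
        gcongr

theorem summable_one_add_nat_rpow_neg {p : ℝ} (hp : 1 < p) :
    Summable fun n : ℕ => (1 + n : ℝ) ^ (-p) := by
  have := (summable_nat_add_iff 1).2 (Real.summable_nat_rpow.2 (neg_lt_neg hp))
  simpa [add_comm] using this

theorem one_sub_mul_tsum_pow_mul {R : Type*} [CommRing R] [TopologicalSpace R]
    [IsTopologicalRing R] [T2Space R] {z : R} {f : ℕ → R} (hf : Summable fun n => z ^ n * f n)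
    (hΔf : Summable fun n => z ^ n * Δ_[1] f n) :
    (1 - z) * ∑' n, z ^ n * f n = f 0 + z * ∑' n, z ^ n * Δ_[1] f n := by
  have h_shift : Summable fun n => z ^ (n + 1) * f (n + 1) := (summable_nat_add_iff 1).2 hf
  have h_Δ : z * ∑' n, z ^ n * Δ_[1] f n =
      ∑' n, z ^ (n + 1) * f (n + 1) - z * ∑' n, z ^ n * f n := by
    rw [← hΔf.tsum_mul_left, ← hf.tsum_mul_left, ← h_shift.tsum_sub (hf.mul_left z)]
    simp only [fwdDiff, pow_succ]
    congr 1; ext n; ring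
  rw [h_Δ, hf.tsum_eq_zero_add]
  simp only [pow_zero, one_mul, pow_succ]
  ring

noncomputable def abelSeries (z : ℂ) (k : ℕ) (s w : ℂ) : ℂ :=
  ∑' n : ℕ, z ^ n * cpowFwdDiff k s w n

section abelSeries

variable {z : ℂ} (hz : ‖z‖ ≤ 1) (k : ℕ)
include hz

theorem summable_pow_mul_cpowFwdDiff {s w : ℂ} (hw : w ∈ slitPlane) (hk : 1 < s.re + k) :
    Summable fun n : ℕ => z ^ n * cpowFwdDiff k s w n := by
  obtain ⟨c, hc, hc1, hcw⟩ := exists_mul_one_add_le_norm_ofReal_add hw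
  exact .of_norm_bounded ((summable_one_add_nat_rpow_neg hk).mul_left _)
    (norm_pow_mul_cpowFwdDiff_le hz hc hc1 hcw k le_rfl le_rfl (by linarith))

theorem one_sub_mul_abelSeries {s w : ℂ} (hw : w ∈ slitPlane) (hk : 1 < s.re + k) :
    (1 - z) * abelSeries z k s w = cpowFwdDiff k s w 0 + z * abelSeries z (k + 1) s w := by
  have h_Δ (n : ℕ) :
      Δ_[1] (fun m : ℕ => cpowFwdDiff k s w m) n = cpowFwdDiff (k + 1) s w n := by
    simp [fwdDiff, cpowFwdDiff_succ]
  have := one_sub_mul_tsum_pow_mul (summable_pow_mul_cpowFwdDiff hz k hw hk)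
    (by simpa only [h_Δ] using
      summable_pow_mul_cpowFwdDiff hz (k + 1) hw (by push_cast; linarith))
  simpa only [abelSeries, h_Δ, Nat.cast_zero] using this

theorem differentiableAt_abelSeries_exponent {w : ℂ} (hw : w ∈ slitPlane) {s₀ : ℂ}
    (hs₀ : 1 < s₀.re + k) : DifferentiableAt ℂ (fun s => abelSeries z k s w) s₀ := by
  obtain ⟨c, hc, hc1, hcw⟩ := exists_mul_one_add_le_norm_ofReal_add hw
  set r := (s₀.re + k - 1) / 2
  have hr : 0 < r := by simp only [r]; linarith
  have h_ball : ∀ s ∈ Metric.ball s₀ r, ‖s‖ ≤ ‖s₀‖ + r ∧ 1 + r ≤ s.re + k := by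
    intro s hs
    rw [Metric.mem_ball, dist_eq_norm] at hs
    have h_re : s₀.re ≤ s.re + ‖s - s₀‖ := by
      simpa using neg_le_of_abs_le (abs_re_le_norm (s - s₀))
    constructor
    · linarith [norm_le_norm_add_norm_sub' s s₀]
    · simp only [r] at hs ⊢; linarith
  refine (differentiableOn_tsum_of_summable_norm
    ((summable_one_add_nat_rpow_neg (by linarith : 1 < 1 + r)).mul_left _)
    (fun n => ((differentiable_cpowFwdDiff_exponent k hw n.cast_nonneg).const_mul
      _).differentiableOn)
    Metric.isOpen_ball fun n s hs => norm_pow_mul_cpowFwdDiff_le hz hc hc1 hcw k (h_ball s hs).1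
      (h_ball s hs).2 (by positivity) n).differentiableAt (Metric.ball_mem_nhds s₀ hr)

theorem differentiableAt_abelSeries_shift {s : ℂ} (hs : 1 < s.re + k) {w₀ : ℂ}
    (hw₀ : w₀ ∈ slitPlane) : DifferentiableAt ℂ (fun w => abelSeries z k s w) w₀ := by
  obtain ⟨c, hc, hc1, hcw⟩ := exists_mul_one_add_le_norm_ofReal_add hw₀
  have h_ball (w : ℂ) (hw : w ∈ Metric.ball w₀ (c / 2)) :=
    mul_one_add_le_norm_of_dist_lt hcw hw
  refine (differentiableOn_tsum_of_summable_norm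
    ((summable_one_add_nat_rpow_neg hs).mul_left _)
    (fun n w hw => ((differentiableAt_cpowFwdDiff_shift k s
      (mem_slitPlane_of_mul_one_add_le_norm (half_pos hc) (h_ball w hw)) n.cast_nonneg).const_mul
        _).differentiableWithinAt)
    Metric.isOpen_ball fun n w hw => norm_pow_mul_cpowFwdDiff_le hz (half_pos hc) (by linarith)
      (h_ball w hw) k le_rfl le_rfl (by linarith) n).differentiableAt
        (Metric.ball_mem_nhds w₀ (half_pos hc))

end abelSeries

/-- Unrolling `(1 - z) Sₖ = Δᵏf(0) + z Sₖ₊₁` (`Sₖ = abelSeries z k`) `k` times, starting from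
the Lerch series `S₀`; `Sₖ` converges for `Re s > 1 - k`. -/
noncomputable def lerchAbel (z : ℂ) (k : ℕ) (s w : ℂ) : ℂ :=
  ∑ i ∈ Finset.range k, z ^ i * cpowFwdDiff i s w 0 / (1 - z) ^ (i + 1) +
    z ^ k * abelSeries z k s w / (1 - z) ^ k

theorem lerchAbel_zero (z s w : ℂ) : lerchAbel z 0 s w = lerch z s w := by
  simp [lerchAbel, abelSeries, lerch, cpowFwdDiff_zero]

section lerchAbel

variable {z : ℂ} (hz : ‖z‖ ≤ 1)
include hz

theorem lerchAbel_succ (hz₁ : z ≠ 1) {k : ℕ} {s w : ℂ} (hw : w ∈ slitPlane)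
    (hk : 1 < s.re + k) :
    lerchAbel z (k + 1) s w = lerchAbel z k s w := by
  have h₁ : (1 : ℂ) - z ≠ 0 := sub_ne_zero.2 hz₁.symm
  rw [lerchAbel, lerchAbel, Finset.sum_range_succ]
  field_simp
  linear_combination (-z ^ k * (1 - z) ^ k) * one_sub_mul_abelSeries hz k hw hk

theorem lerchAbel_eq_lerchAbel (hz₁ : z ≠ 1) {k m : ℕ} {s w : ℂ} (hw : w ∈ slitPlane)
    (hk : 1 < s.re + k) (hm : 1 < s.re + m) : lerchAbel z k s w = lerchAbel z m s w := by
  wlog hkm : k ≤ m generalizing k m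
  · exact (this hm hk (le_of_not_ge hkm)).symm
  induction m, hkm using Nat.le_induction with
  | base => rfl
  | succ m hkm ih =>
    have hm' : 1 < s.re + m := by linarith [(Nat.cast_le (α := ℝ)).2 hkm]
    rw [lerchAbel_succ hz hz₁ hw hm', ih hm']

theorem differentiableAt_lerchAbel_exponent (k : ℕ) {w : ℂ} (hw : w ∈ slitPlane) {s₀ : ℂ}
    (hs₀ : 1 < s₀.re + k) : DifferentiableAt ℂ (fun s => lerchAbel z k s w) s₀ := by
  refine .fun_add (.fun_sum fun i _ => ?_)
    (((differentiableAt_abelSeries_exponent hz k hw hs₀).const_mul _).div_const _)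
  exact (((differentiable_cpowFwdDiff_exponent i hw le_rfl) s₀).const_mul _).div_const _

theorem differentiableAt_lerchAbel_shift (k : ℕ) {s : ℂ} (hs : 1 < s.re + k) {w₀ : ℂ}
    (hw₀ : w₀ ∈ slitPlane) : DifferentiableAt ℂ (fun w => lerchAbel z k s w) w₀ := by
  refine .fun_add (.fun_sum fun i _ => ?_)
    (((differentiableAt_abelSeries_shift hz k hs hw₀).const_mul _).div_const _)
  exact ((differentiableAt_cpowFwdDiff_shift i s hw₀ le_rfl).const_mul _).div_const _

end lerchAbel

theorem lerch_continuation_unit_circle (z : ℂ) (hz1 : ‖z‖ = 1) (hz2 : z ≠ 1) :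
    ∃ G : ℂ → ℂ → ℂ,
      (∀ s : ℂ, ∀ w ∉ negRay,
        DifferentiableAt ℂ (fun s' => G s' w) s ∧
        DifferentiableAt ℂ (fun w' => G s w') w) ∧
      (∀ s w : ℂ, 1 < s.re → w ∉ negRay → G s w = lerch z s w) := by
  have h_ceil (s : ℂ) : 1 < s.re + ⌈2 - s.re⌉₊ := by linarith [Nat.le_ceil (2 - s.re)]
  simp only [negRay_eq_compl_slitPlane, Set.mem_compl_iff, not_not]
  refine ⟨fun s w => lerchAbel z ⌈2 - s.re⌉₊ s w, fun s w hw => ⟨?_, ?_⟩, fun s w hs hw => ?_⟩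
  · have h_near : ∀ᶠ s' in nhds s, (1 : ℝ) < s'.re + ⌈2 - s.re⌉₊ :=
      (isOpen_lt continuous_const (continuous_re.add continuous_const)).mem_nhds (h_ceil s)
    refine (differentiableAt_lerchAbel_exponent hz1.le _ hw (h_ceil s)).congr_of_eventuallyEq ?_
    filter_upwards [h_near] with s' hs'
    exact lerchAbel_eq_lerchAbel hz1.le hz2 hw (h_ceil s') hs'
  · exact differentiableAt_lerchAbel_shift hz1.le _ (h_ceil s) hw
  · exact (lerchAbel_eq_lerchAbel hz1.le hz2 hw (h_ceil s) (m := 0) (by simpa using hs)).trans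
      (lerchAbel_zero z s w)
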